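/- Let Λ be a finite dimensional algebra and T a tilting Λ-module. For any simple left Λ-module S, exactly one of T ⊗_Λ S = 0 and Tor₁^Λ(T, S) = 0 holds. -/

import Mathlib

/- STATEMENT 3: Let `Λ` be a finite dimensional algebra and `T` a tilting (right)
`Λ`-module.  For any simple left `Λ`-module `S`, exactly one of `T ⊗_Λ S = 0` and
`Tor₁^Λ(T, S) = 0` holds.
Right `Λ`-modules are `Λᵐᵒᵖ`-modules.  The balanced tensor product `T ⊗_Λ S` is
constructed by hand (`BalTensor`), `T ⊗_Λ S = 0` is `Subsingleton (BalTensor Λ T S)`,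
and `Tor₁^Λ(T,S) = 0` says that for every projective presentation
`0 → Q₁ → Q₀ → T → 0` of right modules, the induced map `Q₁ ⊗_Λ S → Q₀ ⊗_Λ S` is
injective. -/

open CategoryTheory

section BalancedTensor

variable (R : Type) [Ring R]

def tensorRels (M : Type) [AddCommGroup M] [Module Rᵐᵒᵖ M]
    (N : Type) [AddCommGroup N] [Module R N] : AddSubgroup (FreeAbelianGroup (M × N)) :=
  AddSubgroup.closure
    ({z | ∃ (m m' : M) (y : N), z = FreeAbelianGroup.of (m + m', y) -
        FreeAbelianGroup.of (m, y) - FreeAbelianGroup.of (m', y)} ∪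
     {z | ∃ (m : M) (y y' : N), z = FreeAbelianGroup.of (m, y + y') -
        FreeAbelianGroup.of (m, y) - FreeAbelianGroup.of (m, y')} ∪
     {z | ∃ (m : M) (r : R) (y : N), z = FreeAbelianGroup.of (MulOpposite.op r • m, y) -
        FreeAbelianGroup.of (m, r • y)})

def BalTensor (M : Type) [AddCommGroup M] [Module Rᵐᵒᵖ M]
    (N : Type) [AddCommGroup N] [Module R N] : Type :=
  FreeAbelianGroup (M × N) ⧸ tensorRels R M N

instance (M : Type) [AddCommGroup M] [Module Rᵐᵒᵖ M]
    (N : Type) [AddCommGroup N] [Module R N] : AddCommGroup (BalTensor R M N) :=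
  QuotientAddGroup.Quotient.addCommGroup _

def tmk (M : Type) [AddCommGroup M] [Module Rᵐᵒᵖ M]
    (N : Type) [AddCommGroup N] [Module R N] (m : M) (y : N) : BalTensor R M N :=
  QuotientAddGroup.mk (FreeAbelianGroup.of (m, y))

def tmap (M M' : Type) [AddCommGroup M] [Module Rᵐᵒᵖ M] [AddCommGroup M'] [Module Rᵐᵒᵖ M']
    (N : Type) [AddCommGroup N] [Module R N] (f : M →ₗ[Rᵐᵒᵖ] M') :
    BalTensor R M N →+ BalTensor R M' N := by
  refine QuotientAddGroup.lift _
    ((QuotientAddGroup.mk' (tensorRels R M' N)).comp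
      (FreeAbelianGroup.lift (fun p : M × N => FreeAbelianGroup.of (f p.1, p.2)))) ?_
  have h : tensorRels R M N ≤
      ((QuotientAddGroup.mk' (tensorRels R M' N)).comp
        (FreeAbelianGroup.lift (fun p : M × N => FreeAbelianGroup.of (f p.1, p.2)))).ker := by
    rw [tensorRels, AddSubgroup.closure_le]
    rintro z hz
    obtain (⟨m, m', y, rfl⟩ | ⟨m, y, y', rfl⟩) | ⟨m, r, y, rfl⟩ := hz
    · simp only [SetLike.mem_coe, AddMonoidHom.mem_ker, AddMonoidHom.comp_apply, map_sub,
        FreeAbelianGroup.lift_apply_of, QuotientAddGroup.mk'_apply, ← QuotientAddGroup.mk_sub,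
        QuotientAddGroup.eq_zero_iff]
      exact AddSubgroup.subset_closure (Or.inl (Or.inl ⟨f m, f m', y, by rw [map_add]⟩))
    · simp only [SetLike.mem_coe, AddMonoidHom.mem_ker, AddMonoidHom.comp_apply, map_sub,
        FreeAbelianGroup.lift_apply_of, QuotientAddGroup.mk'_apply, ← QuotientAddGroup.mk_sub,
        QuotientAddGroup.eq_zero_iff]
      exact AddSubgroup.subset_closure (Or.inl (Or.inr ⟨f m, y, y', rfl⟩))
    · simp only [SetLike.mem_coe, AddMonoidHom.mem_ker, AddMonoidHom.comp_apply, map_sub,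
        FreeAbelianGroup.lift_apply_of, QuotientAddGroup.mk'_apply, ← QuotientAddGroup.mk_sub,
        QuotientAddGroup.eq_zero_iff, map_smul]
      exact AddSubgroup.subset_closure (Or.inr ⟨f m, r, y, rfl⟩)
  intro x hx
  exact h hx


end BalancedTensor

def InAdd (R : Type) [Ring R] (M : Type) [AddCommGroup M] [Module R M]
    (X : Type) [AddCommGroup X] [Module R X] : Prop :=
  ∃ (m : ℕ) (Y : ModuleCat.{0} R), Nonempty ((X × Y) ≃ₗ[R] (Fin m → M))

structure IsTilting (R : Type) [Ring R] (T : Type) [AddCommGroup T] [Module R T] : Prop where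
  finite : Module.Finite R T
  pd_le_one : ∃ (Q0 Q1 : ModuleCat.{0} R) (i : Q1 →ₗ[R] Q0) (p : Q0 →ₗ[R] T),
    Module.Projective R Q0 ∧ Module.Projective R Q1 ∧
    Function.Injective i ∧ Function.Surjective p ∧ Function.Exact i p
  ext_self_vanish : ∀ (Q0 Q1 : ModuleCat.{0} R) (i : Q1 →ₗ[R] Q0) (p : Q0 →ₗ[R] T),
    Module.Projective R Q0 → Module.Projective R Q1 →
    Function.Injective i → Function.Surjective p → Function.Exact i p →
    ∀ φ : Q1 →ₗ[R] T, ∃ ψ : Q0 →ₗ[R] T, ψ.comp i = φ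
  coresolution : ∃ (T0 T1 : ModuleCat.{0} R) (a : R →ₗ[R] T0) (b : T0 →ₗ[R] T1),
    InAdd R T T0 ∧ InAdd R T T1 ∧
    Function.Injective a ∧ Function.Surjective b ∧ Function.Exact a b

/-- `Tor₁^Λ(T, S) = 0`: for every projective presentation `0 → Q₁ → Q₀ → T → 0` of the
right module `T`, the induced map `Q₁ ⊗_Λ S → Q₀ ⊗_Λ S` is injective. -/
def Tor1Vanishes (Λ : Type) [Ring Λ] (T : Type) [AddCommGroup T] [Module Λᵐᵒᵖ T]
    (S : Type) [AddCommGroup S] [Module Λ S] : Prop :=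
  ∀ (Q0 Q1 : ModuleCat.{0} Λᵐᵒᵖ) (i : Q1 →ₗ[Λᵐᵒᵖ] Q0) (p : Q0 →ₗ[Λᵐᵒᵖ] T),
    Module.Projective Λᵐᵒᵖ Q0 → Module.Projective Λᵐᵒᵖ Q1 →
    Function.Injective i → Function.Surjective p → Function.Exact i p →
    Function.Injective (tmap Λ Q1 Q0 S i)


/-! Write `S = Λ s₀` and `I = ann(s₀)`, so that `M ⊗_Λ S ≅ M / M I`, and `Tor₁(T, S) = 0` says
`Q₁ ∩ Q₀ I = Q₁ I` for a projective presentation `0 → Q₁ → Q₀ → T → 0`.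

If `T I = T` and `Tor₁(T, S) = 0`, the same holds for every module in `add T`, and the long exact
`Tor`-sequence of `0 → Λ → T₀ → T₁ → 0` gives `Λ ∩ T₀ I = I`, i.e. `Λ = I`, contradicting `s₀ ≠ 0`.

If `T I ≠ T`, then `T` has a nonzero map to the simple right module `D S = Hom_K(S, K)`, which is
therefore a quotient of `T`. A map `Q₁ → D S` detecting an element of `Q₁ ∩ Q₀ I` outside `Q₁ I`
lifts to `Q₁ → T` and extends to `Q₀ → T` because `Ext¹(T, T) = 0`; but a map defined on `Q₀`
kills `Q₀ I` after evaluation at `s₀`.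
-/

open MulOpposite Function

section AnnSMul

variable (Λ : Type) [Ring Λ] {S : Type} [AddCommGroup S] [Module Λ S] (s₀ : S)

/-- `M · ann(s₀)`; for `S = Λ s₀` it is the kernel of `x ↦ x ⊗ s₀ : M → M ⊗_Λ S`. -/
def annSMul (M : Type) [AddCommGroup M] [Module Λᵐᵒᵖ M] : AddSubgroup M :=
  AddSubgroup.closure {z | ∃ r : Λ, r • s₀ = 0 ∧ ∃ x : M, op r • x = z}

/-- For `f : Q₁ → Q₀` the kernel of a projective presentation of `Z`, this is `Tor₁^Λ(Z, S) = 0`. -/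
def ReflectsAnnSMul {M M' : Type} [AddCommGroup M] [Module Λᵐᵒᵖ M] [AddCommGroup M']
    [Module Λᵐᵒᵖ M'] (f : M →ₗ[Λᵐᵒᵖ] M') : Prop :=
  ∀ x, f x ∈ annSMul Λ s₀ M' → x ∈ annSMul Λ s₀ M

variable {Λ s₀} {M M' M'' : Type} [AddCommGroup M] [Module Λᵐᵒᵖ M] [AddCommGroup M']
  [Module Λᵐᵒᵖ M'] [AddCommGroup M''] [Module Λᵐᵒᵖ M'']

lemma op_smul_mem_annSMul {r : Λ} (hr : r • s₀ = 0) (x : M) : op r • x ∈ annSMul Λ s₀ M :=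
  AddSubgroup.subset_closure ⟨r, hr, x, rfl⟩

lemma op_smul_sub_op_smul_mem_annSMul {r r' : Λ} (h : r • s₀ = r' • s₀) (x : M) :
    op r • x - op r' • x ∈ annSMul Λ s₀ M := by
  rw [← sub_smul, ← MulOpposite.op_sub]
  exact op_smul_mem_annSMul (by rw [sub_smul, h, sub_self]) x

lemma annSMul_le_ker {G : Type} [AddCommGroup G] (φ : M →+ G)
    (h : ∀ r : Λ, r • s₀ = 0 → ∀ x, φ (op r • x) = 0) : annSMul Λ s₀ M ≤ φ.ker := by
  rw [annSMul, AddSubgroup.closure_le]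
  rintro _ ⟨r, hr, x, rfl⟩
  exact h r hr x

lemma annSMul_map_le (f : M →ₗ[Λᵐᵒᵖ] M') :
    (annSMul Λ s₀ M).map f.toAddMonoidHom ≤ annSMul Λ s₀ M' := by
  rw [annSMul, AddMonoidHom.map_closure, AddSubgroup.closure_le]
  rintro _ ⟨_, ⟨r, hr, x, rfl⟩, rfl⟩
  exact (f.map_smul (op r) x).symm ▸ op_smul_mem_annSMul hr (f x)

lemma map_mem_annSMul (f : M →ₗ[Λᵐᵒᵖ] M') {x : M} (hx : x ∈ annSMul Λ s₀ M) :
    f x ∈ annSMul Λ s₀ M' :=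
  annSMul_map_le f ⟨x, hx, rfl⟩

lemma annSMul_eq_map_of_surjective {f : M →ₗ[Λᵐᵒᵖ] M'} (hf : Surjective f) :
    annSMul Λ s₀ M' = (annSMul Λ s₀ M).map f.toAddMonoidHom := by
  refine le_antisymm (AddSubgroup.closure_le _ |>.2 ?_) (annSMul_map_le f)
  rintro _ ⟨r, hr, y, rfl⟩
  obtain ⟨x, rfl⟩ := hf y
  exact ⟨op r • x, op_smul_mem_annSMul hr x, f.map_smul _ _⟩

lemma annSMul_eq_top_of_surjective {f : M →ₗ[Λᵐᵒᵖ] M'} (hf : Surjective f)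
    (h : annSMul Λ s₀ M = ⊤) : annSMul Λ s₀ M' = ⊤ := by
  rw [annSMul_eq_map_of_surjective hf, h]
  exact AddSubgroup.map_top_of_surjective _ hf

lemma mem_annSMul_pi_iff {ι : Type} [Fintype ι] (v : ι → M) :
    v ∈ annSMul Λ s₀ (ι → M) ↔ ∀ j, v j ∈ annSMul Λ s₀ M := by
  classical
  refine ⟨fun hv j => map_mem_annSMul (LinearMap.proj j) hv, fun hv => ?_⟩
  rw [← Finset.univ_sum_single v]
  exact AddSubgroup.sum_mem _ fun j _ =>
    map_mem_annSMul (LinearMap.single Λᵐᵒᵖ (fun _ : ι => M) j) (hv j)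

lemma unop_smul_eq_zero_of_mem_annSMul {x : Λᵐᵒᵖ} (hx : x ∈ annSMul Λ s₀ Λᵐᵒᵖ) :
    unop x • s₀ = 0 := by
  let φ : Λᵐᵒᵖ →+ S := AddMonoidHom.mk' (fun x => unop x • s₀) fun x y => by simp [add_smul]
  refine annSMul_le_ker φ (fun r hr u => ?_) hx
  change (unop u * r) • s₀ = 0
  rw [mul_smul, hr, smul_zero]

lemma ReflectsAnnSMul.of_comp {f : M →ₗ[Λᵐᵒᵖ] M'} (g : M' →ₗ[Λᵐᵒᵖ] M'')
    (h : ReflectsAnnSMul Λ s₀ (g ∘ₗ f)) : ReflectsAnnSMul Λ s₀ f :=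
  fun x hx => h x (map_mem_annSMul g hx)

lemma ReflectsAnnSMul.compLeft {f : M →ₗ[Λᵐᵒᵖ] M'} (h : ReflectsAnnSMul Λ s₀ f) (ι : Type)
    [Fintype ι] : ReflectsAnnSMul Λ s₀ (f.compLeft ι) := fun v hv => by
  rw [mem_annSMul_pi_iff] at hv ⊢
  exact fun j => h _ (hv j)

end AnnSMul

section BalTensor

variable {R : Type} [Ring R] {M N : Type} [AddCommGroup M] [Module Rᵐᵒᵖ M] [AddCommGroup N]
  [Module R N]

lemma tmk_add_left (m m' : M) (y : N) :
    tmk R M N (m + m') y = tmk R M N m y + tmk R M N m' y := by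
  have : (QuotientAddGroup.mk (FreeAbelianGroup.of (m + m', y) - FreeAbelianGroup.of (m, y) -
      FreeAbelianGroup.of (m', y)) : BalTensor R M N) = 0 :=
    (QuotientAddGroup.eq_zero_iff _).2 (AddSubgroup.subset_closure (.inl (.inl ⟨m, m', y, rfl⟩)))
  rwa [sub_sub, QuotientAddGroup.mk_sub, sub_eq_zero, QuotientAddGroup.mk_add] at this

lemma tmk_add_right (m : M) (y y' : N) :
    tmk R M N m (y + y') = tmk R M N m y + tmk R M N m y' := by
  have : (QuotientAddGroup.mk (FreeAbelianGroup.of (m, y + y') - FreeAbelianGroup.of (m, y) -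
      FreeAbelianGroup.of (m, y')) : BalTensor R M N) = 0 :=
    (QuotientAddGroup.eq_zero_iff _).2 (AddSubgroup.subset_closure (.inl (.inr ⟨m, y, y', rfl⟩)))
  rwa [sub_sub, QuotientAddGroup.mk_sub, sub_eq_zero, QuotientAddGroup.mk_add] at this

lemma tmk_op_smul (r : R) (m : M) (y : N) : tmk R M N (op r • m) y = tmk R M N m (r • y) := by
  have : (QuotientAddGroup.mk (FreeAbelianGroup.of (op r • m, y) -
      FreeAbelianGroup.of (m, r • y)) : BalTensor R M N) = 0 :=
    (QuotientAddGroup.eq_zero_iff _).2 (AddSubgroup.subset_closure (.inr ⟨m, r, y, rfl⟩))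
  rwa [QuotientAddGroup.mk_sub, sub_eq_zero] at this

variable (R M) in
def tmkLeft (y : N) : M →+ BalTensor R M N :=
  AddMonoidHom.mk' (tmk R M N · y) (tmk_add_left · · y)

lemma tmk_zero_right (m : M) : tmk R M N m 0 = 0 :=
  (AddMonoidHom.mk' (tmk R M N m) (tmk_add_right m)).map_zero

def BalTensor.lift {G : Type} [AddCommGroup G] (β : M → N → G)
    (hl : ∀ m m' y, β (m + m') y = β m y + β m' y) (hr : ∀ m y y', β m (y + y') = β m y + β m y')
    (hs : ∀ (r : R) m y, β (op r • m) y = β m (r • y)) : BalTensor R M N →+ G :=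
  QuotientAddGroup.lift _ (FreeAbelianGroup.lift fun p => β p.1 p.2) <| by
    rw [tensorRels, AddSubgroup.closure_le]
    rintro _ ((⟨m, m', y, rfl⟩ | ⟨m, y, y', rfl⟩) | ⟨m, r, y, rfl⟩) <;> simp [hl, hr, hs]

lemma BalTensor.lift_tmk {G : Type} [AddCommGroup G] (β : M → N → G) (hl hr hs) (m : M) (y : N) :
    BalTensor.lift β hl hr hs (tmk R M N m y) = β m y :=
  FreeAbelianGroup.lift_apply_of _ _

lemma exists_tmk_eq {s₀ : N} (hs₀ : Surjective (· • s₀ : R → N)) (t : BalTensor R M N) :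
    ∃ x, tmk R M N x s₀ = t := by
  induction t using QuotientAddGroup.induction_on with | H z => ?_
  induction z using FreeAbelianGroup.induction_on with
  | zero => exact ⟨0, (tmkLeft R M s₀).map_zero⟩
  | of p =>
    obtain ⟨m, y⟩ := p
    obtain ⟨r, rfl⟩ := hs₀ y
    exact ⟨op r • m, tmk_op_smul r m s₀⟩
  | neg z hz =>
    obtain ⟨x, hx⟩ := hz
    refine ⟨-x, ?_⟩
    rw [QuotientAddGroup.mk_neg, ← hx]
    exact (tmkLeft R M s₀).map_neg x
  | add z z' hz hz' =>
    obtain ⟨x, hx⟩ := hz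
    obtain ⟨x', hx'⟩ := hz'
    refine ⟨x + x', ?_⟩
    rw [QuotientAddGroup.mk_add, ← hx, ← hx']
    exact tmk_add_left x x' s₀

end BalTensor

section CyclicTensor

variable {Λ : Type} [Ring Λ] {S : Type} [AddCommGroup S] [Module Λ S] {s₀ : S}
  {M M' : Type} [AddCommGroup M] [Module Λᵐᵒᵖ M] [AddCommGroup M'] [Module Λᵐᵒᵖ M']

lemma mk_op_smul_eq_of_smul_eq {r r' : Λ} (h : r • s₀ = r' • s₀) (x : M) :
    ((op r • x : M) : M ⧸ annSMul Λ s₀ M) = (op r' • x : M) :=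
  QuotientAddGroup.eq_iff_sub_mem.2 (op_smul_sub_op_smul_mem_annSMul h x)

lemma map_op_smul_eq_of_smul_eq {F G : Type} [AddCommGroup G] [FunLike F M G]
    [AddMonoidHomClass F M G] {l : F} (hl : ∀ y ∈ annSMul Λ s₀ M, l y = 0) {r r' : Λ}
    (h : r • s₀ = r' • s₀) (x : M) : l (op r • x) = l (op r' • x) :=
  sub_eq_zero.1 <| by rw [← map_sub]; exact hl _ (op_smul_sub_op_smul_mem_annSMul h x)

lemma tmk_eq_zero_of_mem_annSMul {x : M} (hx : x ∈ annSMul Λ s₀ M) : tmk Λ M S x s₀ = 0 :=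
  annSMul_le_ker (tmkLeft Λ M s₀)
    (fun r hr u => by rw [tmkLeft, AddMonoidHom.mk'_apply, tmk_op_smul, hr, tmk_zero_right]) hx

/-- The map `M ⊗_Λ S → M ⧸ M · ann(s₀)`, `x ⊗ r s₀ ↦ x r`, inverse to `x ↦ x ⊗ s₀`. -/
noncomputable def toQuotAnnSMul (hs₀ : Surjective (· • s₀ : Λ → S)) :
    BalTensor Λ M S →+ M ⧸ annSMul Λ s₀ M :=
  BalTensor.lift (fun m y => ((op (surjInv hs₀ y) • m : M) : M ⧸ annSMul Λ s₀ M))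
    (fun m m' y => by rw [smul_add, QuotientAddGroup.mk_add])
    (fun m y y' => by
      rw [mk_op_smul_eq_of_smul_eq (r' := surjInv hs₀ y + surjInv hs₀ y'), MulOpposite.op_add,
        add_smul, QuotientAddGroup.mk_add]
      rw [add_smul, surjInv_eq hs₀, surjInv_eq hs₀, surjInv_eq hs₀])
    (fun r m y => by
      rw [smul_smul, ← MulOpposite.op_mul, mk_op_smul_eq_of_smul_eq]
      rw [mul_smul, surjInv_eq hs₀, surjInv_eq hs₀])

lemma toQuotAnnSMul_tmk (hs₀ : Surjective (· • s₀ : Λ → S)) (x : M) :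
    toQuotAnnSMul hs₀ (tmk Λ M S x s₀) = x := by
  rw [toQuotAnnSMul, BalTensor.lift_tmk, mk_op_smul_eq_of_smul_eq (r' := 1), op_one, one_smul]
  rw [one_smul, surjInv_eq hs₀]

lemma tmk_eq_zero_iff (hs₀ : Surjective (· • s₀ : Λ → S)) (x : M) :
    tmk Λ M S x s₀ = 0 ↔ x ∈ annSMul Λ s₀ M := by
  refine ⟨fun h => ?_, tmk_eq_zero_of_mem_annSMul⟩
  rw [← QuotientAddGroup.eq_zero_iff, ← toQuotAnnSMul_tmk hs₀, h, map_zero]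

lemma subsingleton_balTensor_iff (hs₀ : Surjective (· • s₀ : Λ → S)) :
    Subsingleton (BalTensor Λ M S) ↔ annSMul Λ s₀ M = ⊤ := by
  refine ⟨fun _ => eq_top_iff.2 fun x _ => (tmk_eq_zero_iff hs₀ x).1 (Subsingleton.elim _ _),
    fun h => ⟨fun t t' => ?_⟩⟩
  obtain ⟨x, rfl⟩ := exists_tmk_eq hs₀ t
  obtain ⟨x', rfl⟩ := exists_tmk_eq hs₀ t'
  rw [tmk_eq_zero_of_mem_annSMul (h ▸ AddSubgroup.mem_top x),
    tmk_eq_zero_of_mem_annSMul (h ▸ AddSubgroup.mem_top x')]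

lemma injective_tmap_iff (hs₀ : Surjective (· • s₀ : Λ → S)) (f : M →ₗ[Λᵐᵒᵖ] M') :
    Injective (tmap Λ M M' S f) ↔ ReflectsAnnSMul Λ s₀ f := by
  have htmap (x : M) : tmap Λ M M' S f (tmk Λ M S x s₀) = tmk Λ M' S (f x) s₀ := rfl
  rw [injective_iff_map_eq_zero]
  refine ⟨fun h x hx => ?_, fun h t ht => ?_⟩
  · rw [← tmk_eq_zero_iff hs₀]
    exact h _ (by rw [htmap, tmk_eq_zero_iff hs₀]; exact hx)
  · obtain ⟨x, rfl⟩ := exists_tmk_eq hs₀ t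
    rw [htmap, tmk_eq_zero_iff hs₀] at ht
    exact tmk_eq_zero_of_mem_annSMul (h x ht)

end CyclicTensor

section Exactness

variable {R : Type*} [Semiring R] {A B C D : Type*} [AddCommMonoid A] [Module R A]
  [AddCommMonoid B] [Module R B] [AddCommMonoid C] [Module R C] [AddCommMonoid D] [Module R D]

lemma Function.Exact.exists_comp_eq {f : A →ₗ[R] B} {g : B →ₗ[R] C} (hfg : Exact f g)
    (hf : Injective f) (φ : D →ₗ[R] B) (hφ : g ∘ₗ φ = 0) : ∃ κ : D →ₗ[R] A, f ∘ₗ κ = φ := by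
  have hrange (d : D) : φ d ∈ LinearMap.range f := by
    rw [← hfg.linearMap_ker_eq, LinearMap.mem_ker, ← LinearMap.comp_apply, hφ]
    rfl
  refine ⟨(LinearEquiv.ofInjective f hf).symm ∘ₗ φ.codRestrict _ hrange, LinearMap.ext fun d => ?_⟩
  exact LinearEquiv.ofInjective_symm_apply f (h := hf) _

lemma Function.Exact.compLeft {f : A →ₗ[R] B} {g : B →ₗ[R] C} (hfg : Exact f g) (ι : Type*) :
    Exact (f.compLeft ι) (g.compLeft ι) := fun v => by
  refine ⟨fun hv => ?_, ?_⟩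
  · choose u hu using fun j => (hfg (v j)).1 (congrFun hv j)
    exact ⟨u, funext hu⟩
  · rintro ⟨u, rfl⟩
    exact funext fun j => hfg.apply_apply_eq_zero (u j)

lemma Function.Exact.inl_comp_prodMap_id {f : A →ₗ[R] B} {g : B →ₗ[R] C} (hfg : Exact f g) :
    Exact (LinearMap.inl R B D ∘ₗ f) (g.prodMap (LinearMap.id : D →ₗ[R] D)) := by
  rintro ⟨b, d⟩
  simp [hfg b, eq_comm (a := (0 : D))]

end Exactness

section AddClosure

variable {Λ : Type} [Ring Λ] {S : Type} [AddCommGroup S] [Module Λ S] {s₀ : S}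

/-- Independence of `Tor₁(Z, S) = 0` of the chosen presentation of `Z`. -/
lemma reflectsAnnSMul_of_exact {L F Z A B : Type} [AddCommGroup L] [Module Λᵐᵒᵖ L]
    [AddCommGroup F] [Module Λᵐᵒᵖ F] [Module.Projective Λᵐᵒᵖ F] [AddCommGroup Z]
    [Module Λᵐᵒᵖ Z] [AddCommGroup A] [Module Λᵐᵒᵖ A] [AddCommGroup B] [Module Λᵐᵒᵖ B]
    {ι : L →ₗ[Λᵐᵒᵖ] F} {π : F →ₗ[Λᵐᵒᵖ] Z} (hπ : Surjective π) (hιπ : Exact ι π)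
    (hι : ReflectsAnnSMul Λ s₀ ι) {f : A →ₗ[Λᵐᵒᵖ] B} {g : B →ₗ[Λᵐᵒᵖ] Z} (hf : Injective f)
    (hg : Surjective g) (hfg : Exact f g) : ReflectsAnnSMul Λ s₀ f := by
  obtain ⟨ψ, hψ⟩ := Module.projective_lifting_property g π hg
  have hgψ (w : F) : g (ψ w) = π w := LinearMap.congr_fun hψ w
  obtain ⟨κ, hκ⟩ := hfg.exists_comp_eq hf (ψ ∘ₗ ι) <| by
    ext u
    simp [hgψ, hιπ.apply_apply_eq_zero]
  have hsurj : Surjective (f.coprod ψ) := fun b => by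
    obtain ⟨w, hw⟩ := hπ (g b)
    obtain ⟨a, ha⟩ := (hfg (b - ψ w)).1 (by rw [map_sub, hgψ, hw, sub_self])
    exact ⟨(a, w), by simp [ha]⟩
  intro x hx
  rw [annSMul_eq_map_of_surjective hsurj] at hx
  obtain ⟨⟨a, w⟩, haw, hfx⟩ := hx
  replace hfx : f a + ψ w = f x := hfx
  obtain ⟨u, rfl⟩ := (hιπ w).1 <| by
    rw [← hgψ, ← add_sub_cancel_left (f a) (ψ w), hfx, ← map_sub, hfg.apply_apply_eq_zero]
  have hx : x = a + κ u := hf <| by rw [map_add, ← LinearMap.comp_apply f κ, hκ, ← hfx]; rfl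
  rw [hx]
  exact add_mem (map_mem_annSMul (LinearMap.fst _ A F) haw)
    (map_mem_annSMul κ (hι u (map_mem_annSMul (LinearMap.snd _ A F) haw)))

lemma annSMul_eq_top_of_inAdd {T X : Type} [AddCommGroup T] [Module Λᵐᵒᵖ T] [AddCommGroup X]
    [Module Λᵐᵒᵖ X] (hX : InAdd Λᵐᵒᵖ T X) (hT : annSMul Λ s₀ T = ⊤) : annSMul Λ s₀ X = ⊤ := by
  obtain ⟨k, Y, ⟨e⟩⟩ := hX
  have hpow : annSMul Λ s₀ (Fin k → T) = ⊤ :=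
    eq_top_iff.2 fun v _ => (mem_annSMul_pi_iff v).2 fun j => hT ▸ AddSubgroup.mem_top (v j)
  exact annSMul_eq_top_of_surjective LinearMap.fst_surjective
    (annSMul_eq_top_of_surjective e.symm.surjective hpow)

/-- `Tor₁(T, S) = 0` passes to every `X ∈ add T`. -/
lemma reflectsAnnSMul_of_inAdd {Q₀ Q₁ T X A B : Type} [AddCommGroup Q₀] [Module Λᵐᵒᵖ Q₀]
    [Module.Projective Λᵐᵒᵖ Q₀] [AddCommGroup Q₁] [Module Λᵐᵒᵖ Q₁] [AddCommGroup T]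
    [Module Λᵐᵒᵖ T] [AddCommGroup X] [Module Λᵐᵒᵖ X] [AddCommGroup A] [Module Λᵐᵒᵖ A]
    [AddCommGroup B] [Module Λᵐᵒᵖ B] {i : Q₁ →ₗ[Λᵐᵒᵖ] Q₀} {p : Q₀ →ₗ[Λᵐᵒᵖ] T}
    (hp : Surjective p) (hip : Exact i p) (hi : ReflectsAnnSMul Λ s₀ i) (hX : InAdd Λᵐᵒᵖ T X)
    {f : A →ₗ[Λᵐᵒᵖ] B} {g : B →ₗ[Λᵐᵒᵖ] X} (hf : Injective f) (hg : Surjective g)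
    (hfg : Exact f g) : ReflectsAnnSMul Λ s₀ f := by
  obtain ⟨k, Y, ⟨e⟩⟩ := hX
  have : Module.Projective Λᵐᵒᵖ (Fin k → Q₀) :=
    .of_equiv (DirectSum.linearEquivFunOnFintype Λᵐᵒᵖ (Fin k) fun _ => Q₀)
  refine .of_comp (LinearMap.inl _ B Y) <| reflectsAnnSMul_of_exact (ι := i.compLeft (Fin k))
    hp.comp_left (hip.compLeft _) (hi.compLeft _) (g := e ∘ₗ g.prodMap LinearMap.id)
    (LinearMap.inl_injective.comp hf) (e.surjective.comp (hg.prodMap surjective_id)) ?_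
  exact LinearEquiv.postcomp_exact_iff_exact.2 hfg.inl_comp_prodMap_id

theorem annSMul_ne_top_of_tor1Vanishes {T : Type} [AddCommGroup T] [Module Λᵐᵒᵖ T]
    (hT : IsTilting Λᵐᵒᵖ T) (hs₀ : Surjective (· • s₀ : Λ → S)) (hs₀_ne : s₀ ≠ 0)
    (hTor : Tor1Vanishes Λ T S) : annSMul Λ s₀ T ≠ ⊤ := by
  intro htop
  obtain ⟨Q₀, Q₁, i, p, hQ₀, hQ₁, hi, hp, hip⟩ := hT.pd_le_one
  obtain ⟨T₀, T₁, a, b, hT₀, hT₁, ha, hb, hab⟩ := hT.coresolution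
  have hi' : ReflectsAnnSMul Λ s₀ i :=
    (injective_tmap_iff hs₀ i).1 (hTor Q₀ Q₁ i p hQ₀ hQ₁ hi hp hip)
  have ha' : ReflectsAnnSMul Λ s₀ a := reflectsAnnSMul_of_inAdd hp hip hi' hT₁ ha hb hab
  have hone : (1 : Λᵐᵒᵖ) ∈ annSMul Λ s₀ Λᵐᵒᵖ :=
    ha' 1 (annSMul_eq_top_of_inAdd hT₀ htop ▸ AddSubgroup.mem_top (a 1))
  exact hs₀_ne (by simpa using unop_smul_eq_zero_of_mem_annSMul hone)

end AddClosure

section Duality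

variable (K : Type) {Λ : Type} [Field K] [Ring Λ] [Algebra K Λ] (S : Type) [AddCommGroup S]
  [Module Λ S] [Module K S] [IsScalarTower K Λ S]

/-- The right `Λ`-module `D S = Hom_K(S, K)`, `(f r) s = f (r s)`: Mathlib's domain action. -/
abbrev dualModule : Module Λᵐᵒᵖ (Module.Dual K S) :=
  inferInstanceAs (Module Λᵈᵐᵃ (S →ₗ[K] K))

attribute [local instance] dualModule

lemma dual_op_smul_apply (r : Λ) (f : Module.Dual K S) (s : S) : (op r • f) s = f (r • s) :=
  rfl

instance : IsScalarTower K Λᵐᵒᵖ (Module.Dual K S) :=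
  ⟨fun k a f => LinearMap.ext fun s =>
    (congrArg f (smul_assoc k (unop a) s)).trans (f.map_smul k _)⟩

instance isSimpleModule_dual [IsSimpleModule Λ S] [FiniteDimensional K S] :
    IsSimpleModule Λᵐᵒᵖ (Module.Dual K S) := by
  have : Nontrivial S := IsSimpleModule.nontrivial Λ S
  refine { eq_bot_or_eq_top := fun W => ?_ }
  let C : Submodule Λ S :=
    { (W.restrictScalars K).dualCoannihilator with
      smul_mem' := fun r s hs => (Submodule.mem_dualCoannihilator _).2 fun f hf =>
        (Submodule.mem_dualCoannihilator s).1 hs _ (W.smul_mem (op r) hf) }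
  have hWK : W.restrictScalars K = (C.restrictScalars K).dualAnnihilator :=
    Subspace.dualCoannihilator_dualAnnihilator_eq.symm
  rcases IsSimpleOrder.eq_bot_or_eq_top C with hC | hC
  · right
    rw [← Submodule.restrictScalars_eq_top_iff K, hWK, hC, Submodule.restrictScalars_bot,
      Submodule.dualAnnihilator_bot]
  · left
    rw [← Submodule.restrictScalars_eq_bot_iff K, hWK, hC, Submodule.restrictScalars_top,
      Submodule.dualAnnihilator_top]

variable {K S}

lemma apply_apply_eq_zero_of_mem_annSMul {s₀ : S} {M : Type} [AddCommGroup M] [Module Λᵐᵒᵖ M]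
    (G : M →ₗ[Λᵐᵒᵖ] Module.Dual K S) {y : M} (hy : y ∈ annSMul Λ s₀ M) : G y s₀ = 0 :=
  annSMul_le_ker ((LinearMap.applyₗ s₀).toAddMonoidHom.comp G.toAddMonoidHom)
    (fun r hr x => by simp [dual_op_smul_apply, hr]) hy

variable {s₀ : S} {M : Type} [AddCommGroup M] [Module Λᵐᵒᵖ M]

/-- `x ↦ (r s₀ ↦ l (x r))`; well defined because `l` kills `M · ann(s₀)`. -/
noncomputable def toDualOfVanishesOnAnnSMul (hs₀ : Surjective (· • s₀ : Λ → S)) [Module K M]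
    [IsScalarTower K Λᵐᵒᵖ M] (l : M →ₗ[K] K) (hl : ∀ y ∈ annSMul Λ s₀ M, l y = 0) :
    M →ₗ[Λᵐᵒᵖ] Module.Dual K S :=
  have hρ : ∀ s, surjInv hs₀ s • s₀ = s := surjInv_eq hs₀
  { toFun x :=
      { toFun s := l (op (surjInv hs₀ s) • x)
        map_add' s s' := by
          rw [map_op_smul_eq_of_smul_eq hl (r' := surjInv hs₀ s + surjInv hs₀ s')
              (by rw [add_smul, hρ, hρ, hρ]),
            MulOpposite.op_add, add_smul, map_add]
        map_smul' k s := by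
          rw [map_op_smul_eq_of_smul_eq hl (r' := algebraMap K Λ k * surjInv hs₀ s)
              (by rw [mul_smul, hρ, hρ, algebraMap_smul]),
            MulOpposite.op_mul, mul_smul, ← MulOpposite.algebraMap_apply, algebraMap_smul,
            smul_comm, map_smul, RingHom.id_apply] }
    map_add' x x' := LinearMap.ext fun s => by simp
    map_smul' a x := LinearMap.ext fun s => by
      change l _ = l (op (surjInv hs₀ (unop a • s)) • x)
      rw [← op_unop a, smul_smul, ← MulOpposite.op_mul, unop_op]
      exact map_op_smul_eq_of_smul_eq hl (by rw [mul_smul, hρ, hρ]) x }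

variable (K) in
lemma exists_linearMap_dual_apply_ne_zero (hs₀ : Surjective (· • s₀ : Λ → S)) {x : M}
    (hx : x ∉ annSMul Λ s₀ M) : ∃ G : M →ₗ[Λᵐᵒᵖ] Module.Dual K S, G x s₀ ≠ 0 := by
  let _ : Module K M := Module.compHom M (algebraMap K Λᵐᵒᵖ)
  have : IsScalarTower K Λᵐᵒᵖ M := .of_algebraMap_smul fun _ _ => rfl
  let N : Submodule K M :=
    { annSMul Λ s₀ M with
      smul_mem' := fun k _ hy => map_mem_annSMul (DistribSMul.toLinearMap Λᵐᵒᵖ M k) hy }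
  obtain ⟨l, hlx, hl⟩ := N.exists_le_ker_of_notMem hx
  refine ⟨toDualOfVanishesOnAnnSMul hs₀ l fun y hy => hl hy, ?_⟩
  change l (op (surjInv hs₀ s₀) • x) ≠ 0
  rwa [map_op_smul_eq_of_smul_eq (fun y hy => hl hy) (r' := 1) (by rw [one_smul, surjInv_eq hs₀]),
    op_one, one_smul]

variable (K) in
theorem tor1Vanishes_of_annSMul_ne_top [IsSimpleModule Λ S] [FiniteDimensional K S]
    (hs₀ : Surjective (· • s₀ : Λ → S)) {T : Type} [AddCommGroup T] [Module Λᵐᵒᵖ T]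
    (hT : IsTilting Λᵐᵒᵖ T) (hTI : annSMul Λ s₀ T ≠ ⊤) : Tor1Vanishes Λ T S := by
  obtain ⟨x₀, -, hx₀⟩ := SetLike.exists_of_lt hTI.lt_top
  obtain ⟨φ, hφ⟩ := exists_linearMap_dual_apply_ne_zero K hs₀ hx₀
  have hφ_surj : Surjective φ := LinearMap.range_eq_top.1 <|
    (IsSimpleOrder.eq_bot_or_eq_top _).resolve_left fun h =>
      hφ (by rw [LinearMap.range_eq_bot.1 h]; rfl)
  intro Q₀ Q₁ i p hQ₀ hQ₁ hi hp hip
  rw [injective_tmap_iff hs₀]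
  intro x hx
  by_contra hx'
  obtain ⟨G, hG⟩ := exists_linearMap_dual_apply_ne_zero K hs₀ hx'
  obtain ⟨G', rfl⟩ := Module.projective_lifting_property φ G hφ_surj
  obtain ⟨ψ, rfl⟩ := hT.ext_self_vanish Q₀ Q₁ i p hQ₀ hQ₁ hi hp hip G'
  exact hG (apply_apply_eq_zero_of_mem_annSMul (φ ∘ₗ ψ) hx)

end Duality

theorem stmt3 (K Λ : Type) [Field K] [Ring Λ] [Algebra K Λ] [FiniteDimensional K Λ]
    (T : Type) [AddCommGroup T] [Module Λᵐᵒᵖ T] (hT : IsTilting Λᵐᵒᵖ T)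
    (S : Type) [AddCommGroup S] [Module Λ S] (hS : IsSimpleModule Λ S) :
    Xor' (Subsingleton (BalTensor Λ T S)) (Tor1Vanishes Λ T S) := by
  have : Nontrivial S := IsSimpleModule.nontrivial Λ S
  obtain ⟨s₀, hs₀_ne⟩ := exists_ne (0 : S)
  have hs₀ : Surjective (· • s₀ : Λ → S) := IsSimpleModule.toSpanSingleton_surjective Λ hs₀_ne
  let _ : Module K S := Module.compHom S (algebraMap K Λ)
  have : IsScalarTower K Λ S := .of_algebraMap_smul fun _ _ => rfl
  have : Module.Finite Λ S := .of_surjective (LinearMap.toSpanSingleton Λ S s₀) hs₀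
  have : FiniteDimensional K S := Module.Finite.trans Λ S
  refine xor_iff_not_iff'.2 ?_
  rw [subsingleton_balTensor_iff hs₀]
  exact ⟨tor1Vanishes_of_annSMul_ne_top K hs₀ hT, annSMul_ne_top_of_tor1Vanishes hT hs₀ hs₀_ne⟩
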